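/- Any balanced ballot path P (any k ≥ 2) whose semisymmetric height exceeds u + k − 2 must contain a semisymmetric up-step whose starting point has semisymmetric height in {u, u+1, ..., u+k-2}; consequently, if m divides b_u, ..., b_{u+k-1}, then the semisymmetric weight of P with respect to (b, c) is divisible by m. -/
import Mathlib

open scoped Classical

/-- Number of steps among the first `i` steps of `P` equal to basis vector `j`. -/
def cnt (k n : ℕ) (P : Fin (k*n) → Fin k) (j : Fin k) (i : ℕ) : ℕ :=
  (Finset.univ.filter (fun t : Fin (k*n) => (t : ℕ) < i ∧ P t = j)).card

/-- `P` is a `k`-dimensional balanced ballot path of length `k*n`: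
each basis vector appears exactly `n` times, and every partial sum is
weakly decreasing in coordinates. -/
def IsBBP (k n : ℕ) (P : Fin (k*n) → Fin k) : Prop :=
  (∀ j : Fin k, cnt k n P j (k*n) = n) ∧
  (∀ i ≤ k*n, ∀ j j' : Fin k, j ≤ j' → cnt k n P j' i ≤ cnt k n P j i)

/-- Semisymmetric height `g_k` of the `i`-th intermediate point of `P`. -/
def ptHt (k n : ℕ) (P : Fin (k*n) → Fin k) (i : ℕ) : ℤ :=
  ∑ j : Fin k, ((k : ℤ) - 1 - 2*(j : ℕ)) * (cnt k n P j i)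

/-- The semisymmetric height of path `P` is at most `u`. -/
def HeightLE (k n : ℕ) (P : Fin (k*n) → Fin k) (u : ℤ) : Prop :=
  ∀ i ≤ k*n, ptHt k n P i ≤ u

/-- The semisymmetric height of path `P` is exactly `u`. -/
def HeightEq (k n : ℕ) (P : Fin (k*n) → Fin k) (u : ℤ) : Prop :=
  HeightLE k n P u ∧ ∃ i ≤ k*n, ptHt k n P i = u

/-- Semisymmetric weight of a path w.r.t. `(b, c)`: product of `b` at the
height of the starting point over up-steps (indices `< k/2`), times the
product of `c` at the height of the resulting point over the other steps. -/
noncomputable def sswt (k n : ℕ) (b c : ℕ → ℤ) (P : Fin (k*n) → Fin k) : ℤ :=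
  ∏ t : Fin (k*n),
    if (P t : ℕ) < k/2 then b (ptHt k n P (t : ℕ)).toNat
    else c (ptHt k n P ((t : ℕ)+1)).toNat

lemma ptHt_zero (k n : ℕ) (P : Fin (k*n) → Fin k) : ptHt k n P 0 = 0 := by
  simp [ptHt, cnt]

lemma cnt_succ (k n : ℕ) (P : Fin (k*n) → Fin k) (j : Fin k) (i : ℕ) (hi : i < k*n) :
    cnt k n P j (i+1) = cnt k n P j i + (if P ⟨i, hi⟩ = j then 1 else 0) := by
  unfold cnt
  have hset : (Finset.univ.filter (fun t : Fin (k*n) => (t : ℕ) < i+1 ∧ P t = j)) =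
      (Finset.univ.filter (fun t : Fin (k*n) => (t : ℕ) < i ∧ P t = j)) ∪
      (Finset.univ.filter (fun t : Fin (k*n) => (t : ℕ) = i ∧ P t = j)) := by
    ext t
    simp only [Finset.mem_filter, Finset.mem_union, Finset.mem_univ, true_and,
      Nat.lt_succ_iff_lt_or_eq]
    tauto
  have hdisj : Disjoint
      (Finset.univ.filter (fun t : Fin (k*n) => (t : ℕ) < i ∧ P t = j))
      (Finset.univ.filter (fun t : Fin (k*n) => (t : ℕ) = i ∧ P t = j)) := by
    rw [Finset.disjoint_left]
    intro t ht1 ht2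
    simp only [Finset.mem_filter] at ht1 ht2
    omega
  rw [hset, Finset.card_union_of_disjoint hdisj]
  congr 1
  by_cases h : P ⟨i, hi⟩ = j
  · rw [if_pos h]
    have : (Finset.univ.filter (fun t : Fin (k*n) => (t : ℕ) = i ∧ P t = j)) = {⟨i, hi⟩} := by
      ext t
      simp only [Finset.mem_filter, Finset.mem_univ, true_and, Finset.mem_singleton]
      constructor
      · rintro ⟨h1, _⟩; exact Fin.ext h1
      · rintro rfl; exact ⟨rfl, h⟩
    simp [this]
  · rw [if_neg h]
    have : (Finset.univ.filter (fun t : Fin (k*n) => (t : ℕ) = i ∧ P t = j)) = ∅ := by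
      ext t
      simp only [Finset.mem_filter, Finset.mem_univ, true_and, Finset.notMem_empty, iff_false]
      rintro ⟨h1, h2⟩
      exact h (by rw [show (⟨i, hi⟩ : Fin (k*n)) = t from (Fin.ext h1.symm)]; exact h2)
    simp [this]

lemma ptHt_succ (k n : ℕ) (P : Fin (k*n) → Fin k) (i : ℕ) (hi : i < k*n) :
    ptHt k n P (i+1) = ptHt k n P i + ((k : ℤ) - 1 - 2*((P ⟨i, hi⟩ : ℕ))) := by
  unfold ptHt
  have : ∀ j : Fin k, ((k : ℤ) - 1 - 2*(j : ℕ)) * (cnt k n P j (i+1))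
      = ((k : ℤ) - 1 - 2*(j : ℕ)) * (cnt k n P j i)
        + (if P ⟨i, hi⟩ = j then ((k : ℤ) - 1 - 2*(j : ℕ)) else 0) := by
    intro j
    rw [cnt_succ k n P j i hi]
    by_cases h : P ⟨i, hi⟩ = j <;> simp [h] <;> ring
  simp_rw [this]
  rw [Finset.sum_add_distrib]
  congr 1
  rw [Finset.sum_ite_eq Finset.univ (P ⟨i, hi⟩)]
  simp

theorem stmt15 (k n u : ℕ) (hk : 2 ≤ k) (hu : 0 < u) (b c : ℕ → ℤ)
    (P : Fin (k*n) → Fin k) (hP : IsBBP k n P)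
    (hH : ∃ i ≤ k*n, ((u : ℤ) + k - 2) < ptHt k n P i) :
    (∃ t : Fin (k*n), (P t : ℕ) < k/2 ∧
        (u : ℤ) ≤ ptHt k n P (t : ℕ) ∧ ptHt k n P (t : ℕ) ≤ (u : ℤ) + k - 2) ∧
    (∀ m : ℕ, (∀ j < k, (m : ℤ) ∣ b (u + j)) → (m : ℤ) ∣ sswt k n b c P) := by
  -- main claim by induction
  have main : ∀ i, i ≤ k*n → ((u : ℤ) + k - 2) < ptHt k n P i →
      ∃ t : Fin (k*n), (P t : ℕ) < k/2 ∧
        (u : ℤ) ≤ ptHt k n P (t : ℕ) ∧ ptHt k n P (t : ℕ) ≤ (u : ℤ) + k - 2 := by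
    intro i
    induction i with
    | zero =>
      intro _ h0
      rw [ptHt_zero] at h0
      have : (0:ℤ) ≤ (u : ℤ) + k - 2 := by
        have : (1:ℤ) ≤ u := by exact_mod_cast hu
        have : (2:ℤ) ≤ k := by exact_mod_cast hk
        omega
      omega
    | succ i ih =>
      intro hle hgt
      have hi : i < k*n := lt_of_lt_of_le (Nat.lt_succ_self i) hle
      by_cases hprev : ((u : ℤ) + k - 2) < ptHt k n P i
      · exact ih (le_of_lt hi) hprev
      · push_neg at hprev
        have hstep := ptHt_succ k n P i hi
        set j := P ⟨i, hi⟩ with hj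
        have hjk : (j : ℕ) < k := j.isLt
        have hdelta : (0:ℤ) < (k : ℤ) - 1 - 2*((j : ℕ)) := by
          rw [hstep] at hgt; omega
        have hup : (j : ℕ) < k/2 := by
          by_contra hcon
          push_neg at hcon
          have : k ≤ 2 * (j : ℕ) + 1 := by omega
          have : (k : ℤ) ≤ 2 * ((j : ℕ) : ℤ) + 1 := by exact_mod_cast this
          omega
        have hdelta2 : (k : ℤ) - 1 - 2*((j : ℕ)) ≤ (k : ℤ) - 1 := by
          have : (0:ℤ) ≤ ((j : ℕ) : ℤ) := Int.ofNat_nonneg _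
          omega
        refine ⟨⟨i, hi⟩, hup, ?_, hprev⟩
        show (u : ℤ) ≤ ptHt k n P i
        rw [hstep] at hgt
        have hkz : (2:ℤ) ≤ k := by exact_mod_cast hk
        omega
  obtain ⟨i0, hi0, hgt0⟩ := hH
  obtain ⟨t, hup, hlo, hhi⟩ := main i0 hi0 hgt0
  refine ⟨⟨t, hup, hlo, hhi⟩, ?_⟩
  intro m hm
  have huz : (0:ℤ) ≤ (u:ℤ) := Int.ofNat_nonneg u
  have htoNat : (ptHt k n P (t : ℕ)).toNat = u + ((ptHt k n P (t : ℕ)).toNat - u) := by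
    have : (u:ℤ) ≤ ptHt k n P (t : ℕ) := hlo
    omega
  have hjlt : (ptHt k n P (t : ℕ)).toNat - u < k := by omega
  have hdvd_factor : (m : ℤ) ∣ b (ptHt k n P (t : ℕ)).toNat := by
    rw [htoNat]; exact hm _ hjlt
  unfold sswt
  exact Dvd.dvd.trans hdvd_factor (by
    have := Finset.dvd_prod_of_mem
      (fun t : Fin (k*n) =>
        if (P t : ℕ) < k/2 then b (ptHt k n P (t : ℕ)).toNat
        else c (ptHt k n P ((t : ℕ)+1)).toNat)
      (Finset.mem_univ t)
    simpa [hup] using this)
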